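/- arXiv:2211.02974 — 3 statements merged into one kernel-verified Lean document; each statement's English description precedes it below -/
import Mathlib

section
/- Let (B,S) be an S5-subordination algebra and I, J round ideals. Then I is well-inside J in the frame of round ideals (i.e., I* ∨ J is the whole frame's top, equivalently I* ∨ J = B) if and only if U(I) ∩ J ≠ ∅, where U(I) is the set of upper bounds of I. -/
open Set

/-- Image of a set under a relation: `S[X] = {b | ∃ x ∈ X, x S b}`. -/
def relImg {B₁ B₂ : Type*} (S : B₁ → B₂ → Prop) (X : Set B₁) : Set B₂ :=
  {b | ∃ x ∈ X, S x b}

/-- Preimage of a set under a relation: `S⁻¹[X] = {a | ∃ x ∈ X, a S x}`. -/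
def relPre {B₁ B₂ : Type*} (S : B₁ → B₂ → Prop) (X : Set B₂) : Set B₁ :=
  {a | ∃ x ∈ X, S a x}

/-- Relation composition: `a (T₂ ∘ T₁) c` iff `∃ b, a T₁ b ∧ b T₂ c`. -/
def relComp {B₁ B₂ B₃ : Type*} (T₂ : B₂ → B₃ → Prop) (T₁ : B₁ → B₂ → Prop) :
    B₁ → B₃ → Prop :=
  fun a c => ∃ b, T₁ a b ∧ T₂ b c

/-- Pointwise complement of a set: `¬X = {¬x | x ∈ X}`. -/
def complSet {B : Type*} [BooleanAlgebra B] (X : Set B) : Set B := (·ᶜ) '' X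

/-- A subordination between boolean algebras (axioms S1–S4). -/
structure IsSubord {B₁ B₂ : Type*} [BooleanAlgebra B₁] [BooleanAlgebra B₂]
    (T : B₁ → B₂ → Prop) : Prop where
  rel_bot : T ⊥ ⊥
  rel_top : T ⊤ ⊤
  sup_left : ∀ a b c, T a c → T b c → T (a ⊔ b) c
  inf_right : ∀ a c d, T a c → T a d → T a (c ⊓ d)
  mono : ∀ a b c d, a ≤ b → T b c → c ≤ d → T a d

/-- An S5-subordination on a boolean algebra (axioms S1–S7). -/
structure IsS5Sub {B : Type*} [BooleanAlgebra B] (S : B → B → Prop)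
    extends IsSubord S : Prop where
  le_of_rel : ∀ a b, S a b → a ≤ b
  compl_rel : ∀ a b, S a b → S bᶜ aᶜ
  dense : ∀ a b, S a b → ∃ c, S a c ∧ S c b

/-- A compatible subordination between S5-subordination algebras. -/
def IsCompat {B₁ B₂ : Type*} [BooleanAlgebra B₁] [BooleanAlgebra B₂]
    (S₁ : B₁ → B₁ → Prop) (S₂ : B₂ → B₂ → Prop) (T : B₁ → B₂ → Prop) : Prop :=
  IsSubord T ∧ relComp S₂ T = T ∧ relComp T S₁ = T

/-- Ideal of a boolean algebra (as a set). -/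
def IsIdeal {B : Type*} [BooleanAlgebra B] (I : Set B) : Prop :=
  ⊥ ∈ I ∧ (∀ a b : B, a ≤ b → b ∈ I → a ∈ I) ∧ (∀ a b : B, a ∈ I → b ∈ I → a ⊔ b ∈ I)

/-- Round ideal: an ideal with `I = S⁻¹[I]`. -/
def IsRoundIdeal {B : Type*} [BooleanAlgebra B] (S : B → B → Prop) (I : Set B) : Prop :=
  IsIdeal I ∧ relPre S I = I

/-- The ideal generated by a set: intersection of all ideals containing it. -/
def idealGen {B : Type*} [BooleanAlgebra B] (X : Set B) : Set B :=
  ⋂₀ {J | IsIdeal J ∧ X ⊆ J}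

/-- The pseudocomplement of a round ideal: `I* = ¬S[U(I)]`. -/
def pstar {B : Type*} [BooleanAlgebra B] (S : B → B → Prop) (I : Set B) : Set B :=
  complSet (relImg S (upperBounds I))

/-- The well-inside relation on round ideals: `I ≺ J` iff `U(I) ∩ J ≠ ∅`. -/
def precR {B : Type*} [BooleanAlgebra B] (I J : Set B) : Prop :=
  (upperBounds I ∩ J).Nonempty

/-- Normal round ideal: a round ideal with `I = I**`. -/
def IsNormalRoundIdeal {B : Type*} [BooleanAlgebra B] (S : B → B → Prop) (I : Set B) : Prop :=
  IsRoundIdeal S I ∧ pstar S (pstar S I) = I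

/-- The dual of a subordination: `b T̃ a` iff `¬a T ¬b`. -/
def relDual {B₁ B₂ : Type*} [BooleanAlgebra B₁] [BooleanAlgebra B₂]
    (T : B₁ → B₂ → Prop) : B₂ → B₁ → Prop :=
  fun b a => T aᶜ bᶜ

/-- Continuity of a compatible subordination. -/
def IsContinuousSub {B₁ B₂ : Type*} [BooleanAlgebra B₁] [BooleanAlgebra B₂]
    (S₁ : B₁ → B₁ → Prop) (S₂ : B₂ → B₂ → Prop) (T : B₁ → B₂ → Prop) : Prop :=
  ∀ b₁ b₂, S₂ b₁ b₂ → ∃ a, relDual T b₁ a ∧ ∀ a', relDual T b₂ a' → S₁ a a'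

/-- Functional subordination: `T̃ ∘ T ⊆ S₁` and `S₂ ⊆ T ∘ T̃`. -/
def IsFunctionalSub {B₁ B₂ : Type*} [BooleanAlgebra B₁] [BooleanAlgebra B₂]
    (S₁ : B₁ → B₁ → Prop) (S₂ : B₂ → B₂ → Prop) (T : B₁ → B₂ → Prop) : Prop :=
  (∀ a a', relComp (relDual T) T a a' → S₁ a a') ∧
  (∀ b b', S₂ b b' → relComp T (relDual T) b b')

/-!
The ideal generated by two ideals `P` and `J` is `{y | ∃ a ∈ P, b ∈ J, y ≤ a ⊔ b}`, so `I* ∨ J` is all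
of `B` exactly when `cᶜ ⊔ b = ⊤`, i.e. `c ≤ b`, for some `b ∈ J` and some `c` with `u S c` for an
upper bound `u` of `I`. Since `S` is contained in `≤`, such a `b` is itself an upper bound of `I`.
Conversely, if `c ∈ U(I) ∩ J`, roundness of `J` gives `d ∈ J` with `c S d`; then `dᶜ ∈ I*`, and
`dᶜ ⊔ d = ⊤`.
-/

section Ideals

variable {B : Type*} [BooleanAlgebra B]

def idealSup (P J : Set B) : Set B :=
  {y | ∃ a ∈ P, ∃ b ∈ J, y ≤ a ⊔ b}

lemma IsIdeal.idealGen_subset {K X : Set B} (hK : IsIdeal K) (hX : X ⊆ K) : idealGen X ⊆ K :=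
  sInter_subset_of_mem ⟨hK, hX⟩

lemma IsIdeal.isIdeal_idealSup {P J : Set B} (hP : IsIdeal P) (hJ : IsIdeal J) :
    IsIdeal (idealSup P J) := by
  refine ⟨⟨⊥, hP.1, ⊥, hJ.1, bot_le⟩, ?_, ?_⟩
  · rintro x y hxy ⟨a, ha, b, hb, hy⟩
    exact ⟨a, ha, b, hb, hxy.trans hy⟩
  · rintro x y ⟨a, ha, b, hb, hx⟩ ⟨a', ha', b', hb', hy⟩
    refine ⟨a ⊔ a', hP.2.2 _ _ ha ha', b ⊔ b', hJ.2.2 _ _ hb hb', ?_⟩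
    calc x ⊔ y ≤ (a ⊔ b) ⊔ (a' ⊔ b') := sup_le_sup hx hy
      _ = (a ⊔ a') ⊔ (b ⊔ b') := sup_sup_sup_comm a b a' b'

lemma IsIdeal.idealGen_union {P J : Set B} (hP : IsIdeal P) (hJ : IsIdeal J) :
    idealGen (P ∪ J) = idealSup P J := by
  apply Subset.antisymm
  · refine (hP.isIdeal_idealSup hJ).idealGen_subset ?_
    rintro x (hx | hx)
    · exact ⟨x, hx, ⊥, hJ.1, le_sup_left⟩
    · exact ⟨⊥, hP.1, x, hx, le_sup_right⟩
  · rintro y ⟨a, ha, b, hb, hy⟩ K ⟨hK, hPJK⟩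
    exact hK.2.1 y _ hy (hK.2.2 a b (hPJK (Or.inl ha)) (hPJK (Or.inr hb)))

lemma IsIdeal.idealGen_union_eq_univ_iff {P J : Set B} (hP : IsIdeal P) (hJ : IsIdeal J) :
    idealGen (P ∪ J) = univ ↔ ∃ a ∈ P, ∃ b ∈ J, Codisjoint a b := by
  rw [hP.idealGen_union hJ, eq_univ_iff_forall]
  refine ⟨fun h => ?_, fun ⟨a, ha, b, hb, hab⟩ y => ⟨a, ha, b, hb, le_top.trans hab.eq_top.ge⟩⟩
  obtain ⟨a, ha, b, hb, htop⟩ := h ⊤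
  exact ⟨a, ha, b, hb, codisjoint_iff.mpr (top_le_iff.mp htop)⟩

end Ideals

section Pseudocomplement

variable {B : Type*} [BooleanAlgebra B] {S : B → B → Prop}

lemma compl_mem_pstar {I : Set B} {u c : B} (hu : u ∈ upperBounds I) (huc : S u c) :
    cᶜ ∈ pstar S I :=
  ⟨c, ⟨u, hu, huc⟩, rfl⟩

lemma IsSubord.isIdeal_pstar (hS : IsSubord S) (I : Set B) : IsIdeal (pstar S I) := by
  refine ⟨?_, ?_, ?_⟩
  · simpa using compl_mem_pstar (fun x _ => le_top) hS.rel_top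
  · rintro a b hab ⟨c, ⟨u, hu, huc⟩, rfl⟩
    have huac : S u aᶜ := hS.mono u u c aᶜ le_rfl huc (le_compl_comm.mp hab)
    simpa using compl_mem_pstar hu huac
  · rintro a b ⟨c, ⟨u, hu, huc⟩, rfl⟩ ⟨d, ⟨v, hv, hvd⟩, rfl⟩
    have huv : u ⊓ v ∈ upperBounds I := fun x hx => le_inf (hu hx) (hv hx)
    have huvc : S (u ⊓ v) c := hS.mono _ u c c inf_le_left huc le_rfl
    have huvd : S (u ⊓ v) d := hS.mono _ v d d inf_le_right hvd le_rfl
    simpa [compl_inf] using compl_mem_pstar huv (hS.inf_right _ _ _ huvc huvd)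

lemma IsS5Sub.exists_codisjoint_pstar_iff (hS : IsS5Sub S) {I J : Set B}
    (hJ : IsRoundIdeal S J) :
    (∃ a ∈ pstar S I, ∃ b ∈ J, Codisjoint a b) ↔ (upperBounds I ∩ J).Nonempty := by
  constructor
  · rintro ⟨_, ⟨c, ⟨u, hu, huc⟩, rfl⟩, b, hb, hcb⟩
    have hcb' : c ≤ b := by simpa using codisjoint_iff_compl_le_right.mp hcb
    have hub : u ≤ b := (hS.le_of_rel u c huc).trans hcb'
    exact ⟨b, upperBounds_mono_mem hub hu, hb⟩
  · rintro ⟨c, hcI, hcJ⟩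
    obtain ⟨d, hdJ, hcd⟩ : c ∈ relPre S J := hJ.2.symm ▸ hcJ
    exact ⟨dᶜ, compl_mem_pstar hcI hcd, d, hdJ, codisjoint_iff.mpr compl_sup_eq_top⟩

end Pseudocomplement

theorem stmt4_general {B : Type*} [BooleanAlgebra B] (S : B → B → Prop) (hS : IsS5Sub S)
    (I J : Set B) (hJ : IsRoundIdeal S J) :
    idealGen (pstar S I ∪ J) = Set.univ ↔ (upperBounds I ∩ J).Nonempty := by
  rw [(hS.isIdeal_pstar I).idealGen_union_eq_univ_iff hJ.1]
  exact hS.exists_codisjoint_pstar_iff hJ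

/-- for round ideals, `I` is well inside `J` (i.e. `I* ∨ J = B`)
iff `U(I) ∩ J ≠ ∅`. -/
theorem stmt4 {B : Type*} [BooleanAlgebra B] (S : B → B → Prop) (hS : IsS5Sub S)
    (I J : Set B) (hI : IsRoundIdeal S I) (hJ : IsRoundIdeal S J) :
    idealGen (pstar S I ∪ J) = Set.univ ↔ (upperBounds I ∩ J).Nonempty :=
  stmt4_general S hS I J hJ
end

section
/- Let (B,S) be an S5-subordination algebra, a ∈ B, and J a round ideal. Then a ∈ J if and only if there exists a normal round ideal I (i.e., a round ideal with I = I**, double pseudocomplement in the frame of round ideals) such that a ∈ I and I is well-inside J (I ≺ J, equivalently U(I) ∩ J ≠ ∅). -/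
open Set

/-!
If `a ∈ J`, roundness of `J` gives `a S b S d` with `b, d ∈ J`. The round ideal
`P = {x | x S ¬b}` has `¬b` as an upper bound, so `a ∈ P*` because `¬b S ¬a`; and every
element of `P*` lies below `d`, because `¬d S ¬b` puts `¬d` below every upper bound of `P`.
Pseudocomplements of round ideals are normal (`P*** = P*`), so `I = P*` works.
Conversely `I ≺ J` gives an upper bound of `I` inside `J`, so `I ⊆ J`.
-/

section Pseudocomplement

variable {B : Type*} [BooleanAlgebra B] {S : B → B → Prop}

lemma mem_pstar_iff {K : Set B} {a : B} : a ∈ pstar S K ↔ ∃ u ∈ upperBounds K, S u aᶜ := by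
  constructor
  · rintro ⟨y, ⟨u, hu, huy⟩, rfl⟩
    exact ⟨u, hu, by simpa using huy⟩
  · rintro ⟨u, hu, hua⟩
    exact ⟨aᶜ, ⟨u, hu, hua⟩, compl_compl a⟩

lemma pstar_anti {K L : Set B} (h : K ⊆ L) : pstar S L ⊆ pstar S K := by
  intro x hx
  obtain ⟨u, hu, hux⟩ := mem_pstar_iff.1 hx
  exact mem_pstar_iff.2 ⟨u, fun y hy => hu (h hy), hux⟩

lemma isRoundIdeal_pstar (hS : IsS5Sub S) (K : Set B) : IsRoundIdeal S (pstar S K) := by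
  refine ⟨⟨?_, ?_, ?_⟩, ?_⟩
  · exact mem_pstar_iff.2 ⟨⊤, fun _ _ => le_top, by simpa using hS.rel_top⟩
  · intro x y hxy hy
    obtain ⟨u, hu, huy⟩ := mem_pstar_iff.1 hy
    exact mem_pstar_iff.2 ⟨u, hu, hS.mono _ _ _ _ le_rfl huy (compl_le_compl hxy)⟩
  · intro x y hx hy
    obtain ⟨u, hu, hux⟩ := mem_pstar_iff.1 hx
    obtain ⟨v, hv, hvy⟩ := mem_pstar_iff.1 hy
    refine mem_pstar_iff.2 ⟨u ⊓ v, fun z hz => le_inf (hu hz) (hv hz), ?_⟩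
    rw [compl_sup]
    exact hS.inf_right _ _ _ (hS.mono _ _ _ _ inf_le_left hux le_rfl)
      (hS.mono _ _ _ _ inf_le_right hvy le_rfl)
  · ext x
    constructor
    · rintro ⟨y, hy, hxy⟩
      obtain ⟨u, hu, huy⟩ := mem_pstar_iff.1 hy
      exact mem_pstar_iff.2
        ⟨u, hu, hS.mono _ _ _ _ le_rfl huy (compl_le_compl (hS.le_of_rel _ _ hxy))⟩
    · intro hx
      obtain ⟨u, hu, hux⟩ := mem_pstar_iff.1 hx
      obtain ⟨c, huc, hcx⟩ := hS.dense _ _ hux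
      exact ⟨cᶜ, mem_pstar_iff.2 ⟨u, hu, by simpa using huc⟩, by
        simpa using hS.compl_rel _ _ hcx⟩

lemma subset_pstar_pstar (hS : IsS5Sub S) {K : Set B} (hK : K ⊆ relPre S K) :
    K ⊆ pstar S (pstar S K) := by
  intro x hx
  obtain ⟨x', hx', hxx'⟩ := hK hx
  refine mem_pstar_iff.2 ⟨x'ᶜ, fun z hz => ?_, hS.compl_rel _ _ hxx'⟩
  obtain ⟨u, hu, huz⟩ := mem_pstar_iff.1 hz
  exact le_compl_comm.1 ((hu hx').trans (hS.le_of_rel _ _ huz))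

lemma pstar_pstar_pstar (hS : IsS5Sub S) {K : Set B} (hK : K ⊆ relPre S K) :
    pstar S (pstar S (pstar S K)) = pstar S K :=
  (pstar_anti (subset_pstar_pstar hS hK)).antisymm
    (subset_pstar_pstar hS (isRoundIdeal_pstar hS K).2.symm.subset)

lemma isNormalRoundIdeal_pstar (hS : IsS5Sub S) {K : Set B} (hK : K ⊆ relPre S K) :
    IsNormalRoundIdeal S (pstar S K) :=
  ⟨isRoundIdeal_pstar hS K, pstar_pstar_pstar hS hK⟩

end Pseudocomplement

section PrincipalRoundIdeal

variable {B : Type*} [BooleanAlgebra B] {S : B → B → Prop}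

lemma isRoundIdeal_setOf_rel (hS : IsS5Sub S) (c : B) : IsRoundIdeal S {x | S x c} := by
  refine ⟨⟨hS.mono _ _ _ _ bot_le hS.rel_bot bot_le, ?_, fun x y => hS.sup_left x y c⟩, ?_⟩
  · exact fun x y hxy hy => hS.mono _ _ _ _ hxy hy le_rfl
  · ext x
    constructor
    · rintro ⟨y, hyc, hxy⟩
      exact hS.mono _ _ _ _ (hS.le_of_rel _ _ hxy) hyc le_rfl
    · intro hxc
      obtain ⟨y, hxy, hyc⟩ := hS.dense _ _ hxc
      exact ⟨y, hyc, hxy⟩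

lemma mem_pstar_setOf_rel_compl (hS : IsS5Sub S) {a b : B} (hab : S a b) :
    a ∈ pstar S {x | S x bᶜ} :=
  mem_pstar_iff.2 ⟨bᶜ, fun _ hx => hS.le_of_rel _ _ hx, hS.compl_rel _ _ hab⟩

lemma mem_upperBounds_pstar_setOf_rel_compl (hS : IsS5Sub S) {b d : B} (hbd : S b d) :
    d ∈ upperBounds (pstar S {x | S x bᶜ}) := by
  intro y hy
  obtain ⟨u, hu, huy⟩ := mem_pstar_iff.1 hy
  exact compl_le_compl_iff_le.1 ((hu (hS.compl_rel _ _ hbd)).trans (hS.le_of_rel _ _ huy))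

end PrincipalRoundIdeal

lemma subset_of_precR {B : Type*} [BooleanAlgebra B] {I J : Set B} (hJ : IsIdeal J)
    (hIJ : precR I J) : I ⊆ J := by
  obtain ⟨d, hd, hdJ⟩ := hIJ
  exact fun x hx => hJ.2.1 x d (hd hx) hdJ

/-- `a ∈ J` iff there is a normal round ideal `I` with `a ∈ I` and
`I ≺ J`. -/
theorem stmt8 {B : Type*} [BooleanAlgebra B] (S : B → B → Prop) (hS : IsS5Sub S)
    (a : B) (J : Set B) (hJ : IsRoundIdeal S J) :
    a ∈ J ↔ ∃ I : Set B, IsRoundIdeal S I ∧ pstar S (pstar S I) = I ∧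
      a ∈ I ∧ precR I J := by
  constructor
  · intro haJ
    obtain ⟨b, hbJ, hab⟩ : a ∈ relPre S J := hJ.2.symm ▸ haJ
    obtain ⟨d, hdJ, hbd⟩ : b ∈ relPre S J := hJ.2.symm ▸ hbJ
    obtain ⟨hround, hnormal⟩ :=
      isNormalRoundIdeal_pstar hS (isRoundIdeal_setOf_rel hS bᶜ).2.symm.subset
    exact ⟨pstar S {x | S x bᶜ}, hround, hnormal, mem_pstar_setOf_rel_compl hS hab,
      d, mem_upperBounds_pstar_setOf_rel_compl hS hbd, hdJ⟩
  · rintro ⟨I, -, -, haI, hIJ⟩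
    exact subset_of_precR hJ.1 hIJ haI
end

section
/- Let L be a compact regular frame. The map f : L → RI(BL) given by f(a) = {b ∈ BL | b ≺ a} is a frame isomorphism, where BL is the booleanization of L with the restricted well-inside relation, and RI(BL) is the frame of round ideals of the S5-subordination algebra (BL, ≺). -/
open Set

/-- Pseudocomplement in a frame. -/
def pc {L : Type*} [Order.Frame L] (a : L) : L := sSup {x | a ⊓ x = ⊥}

/-- The well-inside relation in a frame: `a ≺ b` iff `a* ⊔ b = ⊤`. -/
def wI {L : Type*} [Order.Frame L] (a b : L) : Prop := pc a ⊔ b = ⊤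

/-- The booleanization of a frame: the set of its regular elements `a = a**`. -/
def Bool' (L : Type*) [Order.Frame L] : Set L := {a | pc (pc a) = a}

/-- A frame is regular if every element is the join of the elements well inside it. -/
def IsRegularFrame (L : Type*) [Order.Frame L] : Prop :=
  ∀ a : L, a = sSup {x | wI x a}

/-- A preframe homomorphism preserves finite meets and directed joins. -/
def IsPreframeHom {L M : Type*} [Order.Frame L] [Order.Frame M] (f : L → M) : Prop :=
  f ⊤ = ⊤ ∧ (∀ a b : L, f (a ⊓ b) = f a ⊓ f b) ∧
    ∀ s : Set L, s.Nonempty → DirectedOn (· ≤ ·) s → f (sSup s) = sSup (f '' s)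

/-- A frame homomorphism preserves arbitrary joins and finite meets. -/
def IsFrameHom {L M : Type*} [Order.Frame L] [Order.Frame M] (f : L → M) : Prop :=
  f ⊤ = ⊤ ∧ (∀ a b : L, f (a ⊓ b) = f a ⊓ f b) ∧
    ∀ s : Set L, f (sSup s) = sSup (f '' s)

/-- Ideal of the booleanization of a frame (joins in the booleanization are
`pc (pc (a ⊔ b))`). -/
def IsBLIdeal {L : Type*} [Order.Frame L] (I : Set L) : Prop :=
  I ⊆ Bool' L ∧ ⊥ ∈ I ∧
  (∀ a ∈ Bool' L, ∀ b ∈ I, a ≤ b → a ∈ I) ∧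
  (∀ a ∈ I, ∀ b ∈ I, pc (pc (a ⊔ b)) ∈ I)

/-- Round ideal of the S5-subordination algebra `(BL, ≺)`. -/
def IsBLRound {L : Type*} [Order.Frame L] (I : Set L) : Prop :=
  IsBLIdeal I ∧ ∀ a ∈ I, ∃ b ∈ I, wI a b

/-
The map sends `a` to the regular elements well inside `a`. Regularity says `a` is the join of
this set, which makes the map an order embedding. Compactness of `⊤` makes `≺` interact with
directed joins: if `b ≺ ⋁ S` with `S` directed, then `b* ⊔ ⋁ S = ⊤` is a directed join covering
`⊤`, so already `b ≺ x` for some `x ∈ S`. Applied to `{x | x ≺ a}` this gives interpolation, hence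
roundness of the image; applied to a round ideal `I` it shows that `I` is the image of `⋁ I`.
-/

section WellInside

variable {L : Type*} [Order.Frame L]

lemma pc_eq_compl (a : L) : pc a = aᶜ :=
  le_antisymm (sSup_le fun _ hx => le_compl_iff_disjoint_left.2 (disjoint_iff.2 hx))
    (le_sSup inf_compl_eq_bot)

lemma wI_iff_compl_sup_eq_top {a b : L} : wI a b ↔ aᶜ ⊔ b = ⊤ := by
  rw [wI, pc_eq_compl]

lemma le_pc_pc (a : L) : a ≤ pc (pc a) := by
  rw [pc_eq_compl, pc_eq_compl]
  exact le_compl_compl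

lemma pc_pc_mem_bool' (a : L) : pc (pc a) ∈ Bool' L := by
  simp only [Bool', mem_ofPred_eq, pc_eq_compl, compl_compl_compl]

lemma bot_mem_bool' : (⊥ : L) ∈ Bool' L := by
  simp [Bool', pc_eq_compl]

lemma wI_bot_left (a : L) : wI ⊥ a := by
  simp [wI_iff_compl_sup_eq_top]

namespace wI

variable {a b c : L}

lemma le (h : wI a b) : a ≤ b := by
  rw [wI_iff_compl_sup_eq_top] at h
  calc a = a ⊓ (aᶜ ⊔ b) := by rw [h, inf_top_eq]
    _ = a ⊓ b := by rw [inf_sup_left, inf_compl_eq_bot, bot_sup_eq]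
    _ ≤ b := inf_le_right

lemma mono_right (h : wI a b) (hbc : b ≤ c) : wI a c := by
  rw [wI_iff_compl_sup_eq_top] at h ⊢
  exact top_le_iff.1 (h ▸ sup_le_sup_left hbc _)

lemma mono_left (hab : a ≤ b) (h : wI b c) : wI a c := by
  rw [wI_iff_compl_sup_eq_top] at h ⊢
  exact top_le_iff.1 (h ▸ sup_le_sup_right (compl_anti hab) _)

lemma sup_left (ha : wI a c) (hb : wI b c) : wI (a ⊔ b) c := by
  rw [wI_iff_compl_sup_eq_top] at ha hb ⊢
  rw [compl_sup, sup_inf_right, ha, hb, inf_top_eq]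

lemma pc_pc_left (h : wI a b) : wI (pc (pc a)) b := by
  rwa [wI_iff_compl_sup_eq_top, pc_eq_compl, pc_eq_compl, compl_compl_compl,
    ← wI_iff_compl_sup_eq_top]

end wI

lemma directedOn_wI_left (a : L) : DirectedOn (· ≤ ·) {x : L | wI x a} :=
  directedOn_of_sup_mem fun _ _ => wI.sup_left

lemma exists_wI_of_wI_sSup (hc : IsCompactElement (⊤ : L)) {b : L} {S : Set L}
    (hne : S.Nonempty) (hdir : DirectedOn (· ≤ ·) S) (h : wI b (sSup S)) :
    ∃ x ∈ S, wI b x := by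
  rw [wI_iff_compl_sup_eq_top] at h
  have hcover : (⊤ : L) ≤ sSup ((bᶜ ⊔ ·) '' S) := by
    obtain ⟨x₀, hx₀⟩ := hne
    rw [← h]
    exact sup_le (le_sup_left.trans (le_sSup (mem_image_of_mem _ hx₀)))
      (sSup_le fun x hx => le_sup_right.trans (le_sSup (mem_image_of_mem _ hx)))
  obtain ⟨_, ⟨x, hx, rfl⟩, htop⟩ :=
    (CompleteLattice.isCompactElement_iff_le_of_directed_sSup_le L ⊤).1 hc _ (hne.image _)
      (hdir.mono_comp fun _ _ h => sup_le_sup_left h bᶜ) hcover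
  exact ⟨x, hx, wI_iff_compl_sup_eq_top.2 (top_le_iff.1 htop)⟩

lemma exists_mem_bool'_wI_wI (hc : IsCompactElement (⊤ : L)) (hr : IsRegularFrame L)
    {a b : L} (h : wI b a) : ∃ c ∈ Bool' L, wI b c ∧ wI c a := by
  rw [hr a] at h
  obtain ⟨x, hxa, hbx⟩ := exists_wI_of_wI_sSup hc ⟨⊥, wI_bot_left a⟩ (directedOn_wI_left a) h
  exact ⟨pc (pc x), pc_pc_mem_bool' x, hbx.mono_right (le_pc_pc x), hxa.pc_pc_left⟩

end WellInside

section RoundIdeals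

variable {L : Type*} [Order.Frame L]

def wellInsideBool (a : L) : Set L := {b | b ∈ Bool' L ∧ wI b a}

lemma isBLIdeal_wellInsideBool (a : L) : IsBLIdeal (wellInsideBool a) :=
  ⟨fun _ hb => hb.1, ⟨bot_mem_bool', wI_bot_left a⟩,
    fun _ hx _ hb hle => ⟨hx, wI.mono_left hle hb.2⟩,
    fun _ hx _ hy => ⟨pc_pc_mem_bool' _, (hx.2.sup_left hy.2).pc_pc_left⟩⟩

lemma isBLRound_wellInsideBool (hc : IsCompactElement (⊤ : L)) (hr : IsRegularFrame L)
    (a : L) : IsBLRound (wellInsideBool a) := by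
  refine ⟨isBLIdeal_wellInsideBool a, fun b hb => ?_⟩
  obtain ⟨c, hcB, hbc, hca⟩ := exists_mem_bool'_wI_wI hc hr hb.2
  exact ⟨c, ⟨hcB, hca⟩, hbc⟩

lemma sSup_wellInsideBool (hr : IsRegularFrame L) (a : L) : sSup (wellInsideBool a) = a := by
  refine le_antisymm (sSup_le fun _ hb => hb.2.le) ?_
  conv_lhs => rw [hr a]
  exact sSup_le fun x hx =>
    (le_pc_pc x).trans (le_sSup ⟨pc_pc_mem_bool' x, hx.pc_pc_left⟩)

lemma wellInsideBool_subset_wellInsideBool_iff (hr : IsRegularFrame L) {a b : L} :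
    wellInsideBool a ⊆ wellInsideBool b ↔ a ≤ b := by
  refine ⟨fun h => ?_, fun h _ hx => ⟨hx.1, hx.2.mono_right h⟩⟩
  rw [← sSup_wellInsideBool hr a, ← sSup_wellInsideBool hr b]
  exact sSup_le_sSup h

lemma IsBLIdeal.directedOn {I : Set L} (hI : IsBLIdeal I) : DirectedOn (· ≤ ·) I :=
  fun u hu v hv => ⟨pc (pc (u ⊔ v)), hI.2.2.2 u hu v hv,
    le_sup_left.trans (le_pc_pc _), le_sup_right.trans (le_pc_pc _)⟩

lemma wellInsideBool_sSup (hc : IsCompactElement (⊤ : L)) {I : Set L} (hI : IsBLRound I) :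
    wellInsideBool (sSup I) = I := by
  obtain ⟨hideal, hround⟩ := hI
  refine Subset.antisymm (fun x ⟨hxB, hxI⟩ => ?_) (fun b hb => ?_)
  · obtain ⟨y, hy, hxy⟩ := exists_wI_of_wI_sSup hc ⟨⊥, hideal.2.1⟩ hideal.directedOn hxI
    exact hideal.2.2.1 x hxB y hy hxy.le
  · obtain ⟨c, hcI, hbc⟩ := hround b hb
    exact ⟨hideal.1 hb, hbc.mono_right (le_sSup hcI)⟩

end RoundIdeals

/-- for a compact regular frame `L`, the map
`f(a) = {b ∈ BL | b ≺ a}` is a frame isomorphism from `L` onto the frame of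
round ideals of `(BL, ≺)` (an order isomorphism onto the round ideals). -/
theorem stmt14 {L : Type*} [Order.Frame L]
    (hc : IsCompactElement (⊤ : L)) (hr : IsRegularFrame L) :
    (∀ a : L, IsBLRound {b : L | b ∈ Bool' L ∧ wI b a}) ∧
    (∀ a b : L, a ≤ b ↔
      {x : L | x ∈ Bool' L ∧ wI x a} ⊆ {x : L | x ∈ Bool' L ∧ wI x b}) ∧
    (∀ I : Set L, IsBLRound I → ∃ a : L, {x : L | x ∈ Bool' L ∧ wI x a} = I) :=
  ⟨isBLRound_wellInsideBool hc hr,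
    fun _ _ => (wellInsideBool_subset_wellInsideBool_iff hr).symm,
    fun _ hI => ⟨_, wellInsideBool_sSup hc hI⟩⟩
end
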